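/- arXiv:1008.1051 — 5 statements merged into one kernel-verified Lean document; each statement's English description precedes it below -/
import Mathlib

section
/- For every finite set P ⊆ ℝ² of n points in general position and every integer k with 0 ≤ k ≤ n(n−1)/2, there exists a finite set W ⊆ ℝ² such that the witness Gabriel graph GG⁻(P,W) has exactly k edges (i.e., exactly k unordered pairs of distinct points of P are adjacent). -/
open scoped RealInnerProductSpace

noncomputable section

/-- The Euclidean plane. -/
abbrev Pt := EuclideanSpace ℝ (Fin 2)

/-- The closed disk with diameter `ab`. -/
def diskD (a b : Pt) : Set Pt := Metric.closedBall (midpoint ℝ a b) (dist a b / 2)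

/-- `a` and `b` are adjacent in the witness Gabriel graph with witness set `W`. -/
def gabrielEdge (W : Set Pt) (a b : Pt) : Prop := (diskD a b \ {a, b}) ∩ W = ∅

/-- General position: no three points collinear, no four points concyclic. -/
def GenPos (S : Set Pt) : Prop :=
  (∀ a ∈ S, ∀ b ∈ S, ∀ c ∈ S, a ≠ b → a ≠ c → b ≠ c → ¬ Collinear ℝ ({a, b, c} : Set Pt)) ∧
  (∀ a ∈ S, ∀ b ∈ S, ∀ c ∈ S, ∀ d ∈ S, a ≠ b → a ≠ c → a ≠ d → b ≠ c → b ≠ d → c ≠ d →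
    ¬ EuclideanGeometry.Cospherical ({a, b, c, d} : Set Pt))

/-- Planar determinant `u₁v₂ − u₂v₁`. -/
def det2 (u v : Pt) : ℝ := u 0 * v 1 - u 1 * v 0

/-- Counterclockwise convex position. -/
def CCWConvexPos {m : ℕ} (q : Fin m → Pt) : Prop :=
  ∀ i j k : Fin m, i < j → j < k → 0 < det2 (q j - q i) (q k - q i)

/-- Cyclic successor in `Fin m`. -/
def cyclicSucc {m : ℕ} (hm : 0 < m) (i : Fin m) : Fin m :=
  ⟨((i : ℕ) + 1) % m, Nat.mod_lt _ hm⟩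

/-!
Fix a direction `v` and compare the diameter disks of pairs of `P` by their support value
`⟪m, v⟫ + r‖v‖`. The point of a disk that is extreme in direction `v` (its apex) lies beyond every
disk of smaller support value, so witnesses placed at the apices of the disks with the largest
support values kill exactly those edges. For generic `v` no apex is an endpoint of its diameter,
and, because general position forbids two pairs with the same diameter disk, distinct pairs have
distinct support values; hence every number of surviving edges is attained.
-/

open Finset

section NormedSpace

variable {E : Type*} [NormedAddCommGroup E] [InnerProductSpace ℝ E]

lemma inner_le_of_mem_closedBall {c w : E} {r : ℝ} (v : E) (hw : w ∈ Metric.closedBall c r) :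
    ⟪w, v⟫ ≤ ⟪c, v⟫ + r * ‖v‖ := by
  have hwc : ‖w - c‖ ≤ r := by rwa [Metric.mem_closedBall, dist_eq_norm] at hw
  have := (real_inner_le_norm (w - c) v).trans (mul_le_mul_of_nonneg_right hwc (norm_nonneg v))
  rw [inner_sub_left] at this
  linarith

lemma add_smul_mem_closedBall {c : E} {r : ℝ} (hr : 0 ≤ r) (v : E) :
    c + (r / ‖v‖) • v ∈ Metric.closedBall c r := by
  rw [Metric.mem_closedBall, dist_self_add_left, norm_smul, Real.norm_eq_abs,
    abs_of_nonneg (by positivity)]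
  rcases eq_or_ne v 0 with rfl | hv
  · simpa using hr
  · rw [div_mul_cancel₀ _ (norm_ne_zero_iff.mpr hv)]

lemma inner_add_smul_self {c v : E} (r : ℝ) (hv : v ≠ 0) :
    ⟪c + (r / ‖v‖) • v, v⟫ = ⟪c, v⟫ + r * ‖v‖ := by
  have : ‖v‖ ≠ 0 := norm_ne_zero_iff.mpr hv
  rw [inner_add_left, real_inner_smul_left, real_inner_self_eq_norm_sq]
  field_simp

lemma dist_left_midpoint_eq_half (a b : E) : dist a (midpoint ℝ a b) = dist a b / 2 := by
  rw [dist_left_midpoint]; simp only [Real.norm_ofNat]; ring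

lemma dist_right_midpoint_eq_half (a b : E) : dist b (midpoint ℝ a b) = dist a b / 2 := by
  rw [dist_right_midpoint]; simp only [Real.norm_ofNat]; ring

end NormedSpace

lemma Finset.card_filter_mem_eq_mul {α β : Type*} [DecidableEq β] {A : Finset α} {f : α → β}
    {m : ℕ} (hf : ∀ a ∈ A, #{a' ∈ A | f a' = f a} = m) {L : Finset β} (hL : L ⊆ A.image f) :
    #{a ∈ A | f a ∈ L} = m * #L := by
  rw [card_eq_sum_card_fiberwise (s := {a ∈ A | f a ∈ L}) (t := L) fun a ha => (mem_filter.mp ha).2,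
    mul_comm, ← smul_eq_mul, ← sum_const]
  refine sum_congr rfl fun b hb => ?_
  obtain ⟨a, ha, rfl⟩ := mem_image.mp (hL hb)
  rw [filter_filter, ← hf a ha]
  congr 1
  exact filter_congr fun a' _ => ⟨And.right, fun h => ⟨h ▸ hb, h⟩⟩

lemma Finset.exists_subset_card_eq_forall_lt {β : Type*} [LinearOrder β] (V : Finset β) {j : ℕ}
    (hj : j ≤ #V) : ∃ L ⊆ V, #L = j ∧ ∀ y ∈ L, ∀ z ∈ V, z ∉ L → y < z := by
  classical
  induction V using Finset.induction_on_min generalizing j with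
  | empty => exact ⟨∅, subset_rfl, (Nat.le_zero.mp hj).symm, by simp⟩
  | insert a V ha ih =>
    rcases j with _ | j
    · exact ⟨∅, empty_subset _, rfl, by simp⟩
    have haV : a ∉ V := fun h => lt_irrefl a (ha a h)
    obtain ⟨L, hLV, hL, hlt⟩ := ih (j := j) (by rw [card_insert_of_notMem haV] at hj; omega)
    refine ⟨insert a L, insert_subset_insert a hLV, ?_, fun y hy z hz hzL => ?_⟩
    · rw [card_insert_of_notMem (fun h => haV (hLV h)), hL]
    rw [mem_insert, not_or] at hzL
    have hzV : z ∈ V := (mem_insert.mp hz).resolve_left hzL.1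
    rcases mem_insert.mp hy with rfl | hy
    · exact ha z hzV
    · exact hlt y hy z hzV hzL.2

lemma Pt.ext_zero {u : Pt} (h0 : u 0 = 0) (h1 : u 1 = 0) : u = 0 := by
  ext i; fin_cases i <;> simpa

lemma det2_smul_left (c : ℝ) (u v : Pt) : det2 (c • u) v = c * det2 u v := by
  simp only [det2, PiLp.smul_apply, smul_eq_mul]; ring

lemma det2_self (v : Pt) : det2 v v = 0 := by
  rw [det2]; ring

lemma det2_neg_left (u v : Pt) : det2 (-u) v = -det2 u v := by
  simp only [det2, PiLp.neg_apply]; ring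

lemma det2_toLp (u : Pt) (x : ℝ) : det2 u !₂[1, x] = u 0 * x - u 1 := by
  simp [det2]

lemma inner_toLp (u : Pt) (x : ℝ) : ⟪u, !₂[1, x]⟫ = u 0 + u 1 * x := by
  simp [PiLp.inner_apply, Fin.sum_univ_two, mul_comm]

lemma norm_toLp (x : ℝ) : ‖!₂[(1 : ℝ), x]‖ = √(1 + x ^ 2) := by
  simp [EuclideanSpace.norm_eq, Fin.sum_univ_two]

section Genericity

open Polynomial

lemma finite_setOf_quadratic_eq_zero {a b c : ℝ} (h : a ≠ 0 ∨ b ≠ 0 ∨ c ≠ 0) :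
    {x : ℝ | a * x ^ 2 + b * x + c = 0}.Finite := by
  have hp : C a * X ^ 2 + C b * X + C c ≠ 0 := by
    contrapose! h
    exact ⟨by simpa using congrArg (coeff · 2) h, by simpa using congrArg (coeff · 1) h,
      by simpa using congrArg (coeff · 0) h⟩
  refine (finite_setOfPred_isRoot hp).subset fun x hx => ?_
  simpa using hx

lemma finite_setOf_det2_eq_zero {u : Pt} (hu : u ≠ 0) :
    {x : ℝ | det2 u !₂[1, x] = 0}.Finite := by
  refine Set.Subsingleton.finite fun x hx y hy => ?_
  simp only [Set.mem_ofPred_eq, det2_toLp] at hx hy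
  have hu0 : u 0 ≠ 0 := fun hu0 => hu (Pt.ext_zero hu0 (by simpa [hu0] using hx))
  exact mul_left_cancel₀ hu0 (by linarith)

lemma finite_setOf_support_eq {c c' : Pt} {r r' : ℝ} (h : (c, r) ≠ (c', r')) :
    {x : ℝ | ⟪c, !₂[1, x]⟫ + r * ‖!₂[(1 : ℝ), x]‖ =
      ⟪c', !₂[1, x]⟫ + r' * ‖!₂[(1 : ℝ), x]‖}.Finite := by
  set d := c - c'
  set ρ := r' - r
  have hcoeff : d 1 ^ 2 - ρ ^ 2 ≠ 0 ∨ 2 * d 0 * d 1 ≠ 0 ∨ d 0 ^ 2 - ρ ^ 2 ≠ 0 := by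
    by_contra! h'
    obtain ⟨h2, h1, h0⟩ := h'
    have hρ : ρ = 0 := pow_eq_zero_iff (n := 4) (by norm_num) |>.mp (by nlinarith)
    have hd0 : d 0 = 0 := by simpa [hρ] using h0
    have hd1 : d 1 = 0 := by simpa [hρ] using h2
    exact h (Prod.ext (sub_eq_zero.mp (Pt.ext_zero hd0 hd1)) (by linarith [sub_eq_zero.mp hρ]))
  refine (finite_setOf_quadratic_eq_zero hcoeff).subset fun x hx => ?_
  simp only [Set.mem_ofPred_eq, inner_toLp, norm_toLp] at hx ⊢
  have hlin : d 0 + d 1 * x = ρ * √(1 + x ^ 2) := by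
    simp only [d, ρ, PiLp.sub_apply]; linarith
  have hsq := congrArg (· ^ 2) hlin
  simp only [mul_pow, Real.sq_sqrt (by positivity : (0 : ℝ) ≤ 1 + x ^ 2)] at hsq
  linear_combination hsq

end Genericity

lemma GenPos.eq_or_eq_swap_of_midpoint_eq {S : Set Pt} (hS : GenPos S) {a b c d : Pt}
    (ha : a ∈ S) (hb : b ∈ S) (hc : c ∈ S) (hd : d ∈ S) (hab : a ≠ b) (hcd : c ≠ d)
    (hm : midpoint ℝ a b = midpoint ℝ c d) (hr : dist a b = dist c d) :
    (c, d) = (a, b) ∨ (c, d) = (b, a) := by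
  have hsum : a + b = c + d := by
    simpa [midpoint_eq_smul_add, smul_smul] using congrArg ((2 : ℝ) • ·) hm
  by_cases hca : c = a
  · subst hca; exact .inl (Prod.ext rfl (by linear_combination (norm := abel) -hsum))
  by_cases hcb : c = b
  · subst hcb; exact .inr (Prod.ext rfl (by linear_combination (norm := abel) -hsum))
  have hda : d ≠ a := by rintro rfl; exact hcb (by linear_combination (norm := abel) -hsum)
  have hdb : d ≠ b := by rintro rfl; exact hca (by linear_combination (norm := abel) -hsum)
  refine absurd ⟨midpoint ℝ a b, dist a b / 2, ?_⟩ <|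
    hS.2 a ha b hb c hc d hd hab (Ne.symm hca) (Ne.symm hda) (Ne.symm hcb) (Ne.symm hdb) hcd
  simp only [Set.mem_insert_iff, Set.mem_singleton_iff, forall_eq_or_imp, forall_eq]
  refine ⟨dist_left_midpoint_eq_half a b, dist_right_midpoint_eq_half a b, ?_, ?_⟩ <;>
    rw [hm, hr]
  exacts [dist_left_midpoint_eq_half c d, dist_right_midpoint_eq_half c d]

def diskSupport (v : Pt) (e : Pt × Pt) : ℝ :=
  ⟪midpoint ℝ e.1 e.2, v⟫ + dist e.1 e.2 / 2 * ‖v‖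

def diskApex (v : Pt) (e : Pt × Pt) : Pt :=
  midpoint ℝ e.1 e.2 + (dist e.1 e.2 / 2 / ‖v‖) • v

lemma diskSupport_swap (v : Pt) (e : Pt × Pt) : diskSupport v e.swap = diskSupport v e := by
  simp [diskSupport, midpoint_comm, dist_comm]

lemma diskApex_swap (v : Pt) (e : Pt × Pt) : diskApex v e.swap = diskApex v e := by
  simp [diskApex, midpoint_comm, dist_comm]

lemma inner_le_diskSupport {w : Pt} (v : Pt) {e : Pt × Pt} (hw : w ∈ diskD e.1 e.2) :
    ⟪w, v⟫ ≤ diskSupport v e :=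
  inner_le_of_mem_closedBall v hw

lemma inner_diskApex {v : Pt} (hv : v ≠ 0) (e : Pt × Pt) : ⟪diskApex v e, v⟫ = diskSupport v e :=
  inner_add_smul_self _ hv

lemma diskApex_mem_diskD (v : Pt) (e : Pt × Pt) : diskApex v e ∈ diskD e.1 e.2 :=
  add_smul_mem_closedBall (by positivity) v

lemma diskApex_ne_fst {v : Pt} {e : Pt × Pt} (h : det2 (e.1 - e.2) v ≠ 0) :
    diskApex v e ≠ e.1 := by
  intro happ
  have hsmul : (dist e.1 e.2 / 2 / ‖v‖) • v = e.1 - midpoint ℝ e.1 e.2 := eq_sub_of_add_eq' happ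
  have hsub : e.1 - e.2 = (2 * (dist e.1 e.2 / 2 / ‖v‖)) • v := by
    rw [mul_smul, hsmul, left_sub_midpoint, smul_smul]
    norm_num
  rw [hsub, det2_smul_left, det2_self, mul_zero] at h
  exact h rfl

lemma diskApex_ne_snd {v : Pt} {e : Pt × Pt} (h : det2 (e.1 - e.2) v ≠ 0) :
    diskApex v e ≠ e.2 := by
  rw [← diskApex_swap]
  refine diskApex_ne_fst ?_
  rwa [Prod.fst_swap, Prod.snd_swap, ← neg_sub, det2_neg_left, neg_ne_zero]

lemma not_gabrielEdge_image_diskApex {v : Pt} {K : Finset (Pt × Pt)} {e : Pt × Pt} (he : e ∈ K)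
    (h : det2 (e.1 - e.2) v ≠ 0) : ¬ gabrielEdge (K.image (diskApex v) : Set Pt) e.1 e.2 := by
  intro hedge
  refine (Set.eq_empty_iff_forall_notMem.mp hedge) (diskApex v e) ⟨⟨diskApex_mem_diskD v e, ?_⟩, ?_⟩
  · simp [diskApex_ne_fst h, diskApex_ne_snd h]
  · exact Finset.mem_coe.mpr (mem_image_of_mem _ he)

lemma gabrielEdge_image_diskApex {v : Pt} (hv : v ≠ 0) {K : Finset (Pt × Pt)} {e : Pt × Pt}
    (he : ∀ e' ∈ K, diskSupport v e < diskSupport v e') :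
    gabrielEdge (K.image (diskApex v) : Set Pt) e.1 e.2 := by
  refine Set.eq_empty_iff_forall_notMem.mpr ?_
  rintro _ ⟨⟨hw, -⟩, hwK⟩
  obtain ⟨e', he', rfl⟩ := Finset.mem_image.mp (Finset.mem_coe.mp hwK)
  have := inner_le_diskSupport v hw
  rw [inner_diskApex hv] at this
  exact (he e' he').not_ge this

lemma GenPos.exists_generic_direction {P : Finset Pt} (hP : GenPos (P : Set Pt)) :
    ∃ v : Pt, v ≠ 0 ∧ (∀ e ∈ P.offDiag, det2 (e.1 - e.2) v ≠ 0) ∧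
      ∀ e ∈ P.offDiag, ∀ e' ∈ P.offDiag,
        diskSupport v e' = diskSupport v e → e' = e ∨ e' = e.swap := by
  classical
  let disk (e : Pt × Pt) : Pt × ℝ := (midpoint ℝ e.1 e.2, dist e.1 e.2 / 2)
  have hfin : ((⋃ e ∈ P.offDiag, {x : ℝ | det2 (e.1 - e.2) !₂[1, x] = 0}) ∪
      ⋃ p ∈ {p ∈ P.offDiag ×ˢ P.offDiag | disk p.1 ≠ disk p.2},
        {x : ℝ | diskSupport !₂[1, x] p.1 = diskSupport !₂[1, x] p.2}).Finite := by
    refine .union (.biUnion (finite_toSet _) fun e he => finite_setOf_det2_eq_zero ?_)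
      (.biUnion (finite_toSet _) fun p hp => finite_setOf_support_eq (mem_filter.mp hp).2)
    exact sub_ne_zero.mpr (mem_offDiag.mp he).2.2
  obtain ⟨x, hx⟩ := hfin.exists_notMem
  simp only [Set.mem_union, Set.mem_iUnion, Set.mem_ofPred_eq, not_or, not_exists] at hx
  refine ⟨!₂[1, x], fun h => by simpa using congrArg (· 0) h, fun e he => hx.1 e he,
    fun e he e' he' hsupp => ?_⟩
  have hdisk : disk e = disk e' := by
    by_contra hne
    exact hx.2 (e, e') (mem_filter.mpr ⟨mem_product.mpr ⟨he, he'⟩, hne⟩) hsupp.symm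
  obtain ⟨ha, hb, hab⟩ := mem_offDiag.mp he
  obtain ⟨hc, hd, hcd⟩ := mem_offDiag.mp he'
  exact hP.eq_or_eq_swap_of_midpoint_eq ha hb hc hd hab hcd (congrArg Prod.fst hdisk)
    ((div_left_inj' two_ne_zero).mp (congrArg Prod.snd hdisk))

lemma card_filter_diskSupport_eq {P : Finset Pt} {v : Pt}
    (hv : ∀ e ∈ P.offDiag, ∀ e' ∈ P.offDiag,
      diskSupport v e' = diskSupport v e → e' = e ∨ e' = e.swap) :
    ∀ e ∈ P.offDiag, #{e' ∈ P.offDiag | diskSupport v e' = diskSupport v e} = 2 := by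
  intro e he
  have hswap : e.swap ∈ P.offDiag := by
    obtain ⟨ha, hb, hab⟩ := mem_offDiag.mp he
    exact mem_offDiag.mpr ⟨hb, ha, hab.symm⟩
  have hfiber : {e' ∈ P.offDiag | diskSupport v e' = diskSupport v e} = {e, e.swap} := by
    ext e'
    simp only [mem_filter, mem_insert, mem_singleton]
    constructor
    · exact fun h => hv e he e' h.1 h.2
    · rintro (rfl | rfl)
      exacts [⟨he, rfl⟩, ⟨hswap, diskSupport_swap v e⟩]
  rw [hfiber, card_pair]
  exact fun h => (mem_offDiag.mp he).2.2 (congrArg Prod.fst h)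

lemma gabrielEdge_iff_diskSupport_mem {v : Pt} (hv : v ≠ 0) {S : Finset (Pt × Pt)}
    (hdet : ∀ e ∈ S, det2 (e.1 - e.2) v ≠ 0) {L : Finset ℝ}
    (hL : ∀ y ∈ L, ∀ e ∈ S, diskSupport v e ∉ L → y < diskSupport v e) {e : Pt × Pt}
    (he : e ∈ S) :
    gabrielEdge ({e ∈ S | diskSupport v e ∉ L}.image (diskApex v) : Set Pt) e.1 e.2 ↔
      diskSupport v e ∈ L := by
  refine ⟨fun hedge => ?_, fun hmem => gabrielEdge_image_diskApex hv fun e' he' => ?_⟩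
  · by_contra hn
    exact not_gabrielEdge_image_diskApex (mem_filter.mpr ⟨he, hn⟩) (hdet e he) hedge
  · obtain ⟨he'S, he'L⟩ := mem_filter.mp he'
    exact hL _ hmem e' he'S he'L

/-- For every finite set `P ⊆ ℝ²` of `n` points in general position and every
`k ≤ n(n−1)/2`, there is a finite witness set `W` such that `GG⁻(P,W)` has exactly `k` edges
(counted here as `2k` ordered pairs of distinct adjacent vertices). -/
theorem witness_gabriel_any_number_of_edges
    (P : Finset Pt) (n : ℕ) (hcard : P.card = n) (hgp : GenPos (P : Set Pt))
    (k : ℕ) (hk : k ≤ n * (n - 1) / 2) :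
    ∃ W : Finset Pt,
      {pq : Pt × Pt | pq.1 ∈ P ∧ pq.2 ∈ P ∧ pq.1 ≠ pq.2 ∧
        gabrielEdge (W : Set Pt) pq.1 pq.2}.ncard = 2 * k := by
  classical
  obtain ⟨v, hv, hdet, hsupp⟩ := hgp.exists_generic_direction
  have hfiber := card_filter_diskSupport_eq hsupp
  set V := P.offDiag.image (diskSupport v)
  have hkV : k ≤ #V := by
    have hV := card_filter_mem_eq_mul hfiber (subset_refl V)
    rw [filter_true_of_mem fun e he => mem_image_of_mem _ he, offDiag_card, hcard] at hV
    rw [Nat.mul_sub_one] at hk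
    omega
  obtain ⟨L, hLV, hLk, hLlt⟩ := V.exists_subset_card_eq_forall_lt hkV
  refine ⟨{e ∈ P.offDiag | diskSupport v e ∉ L}.image (diskApex v), ?_⟩
  calc _ = (P.offDiag.filter (diskSupport v · ∈ L) : Set (Pt × Pt)).ncard := by
        congr 1
        ext e
        have := and_congr_right fun he => gabrielEdge_iff_diskSupport_mem hv hdet
          (fun y hy e he hn => hLlt y hy _ (mem_image_of_mem _ he) hn) (e := e) he
        simpa only [mem_offDiag, and_assoc, coe_filter, Set.mem_ofPred_eq] using this
    _ = 2 * k := by rw [Set.ncard_coe_finset, card_filter_mem_eq_mul hfiber hLV, hLk]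
end
end

section
/- For every finite set P ⊆ ℝ² of n ≥ 1 points, there exists a finite set W ⊆ ℝ² with |W| ≤ n − 1 such that the witness Gabriel graph GG⁻(P,W) has no edges, i.e., no two distinct points of P are adjacent. -/
/-! A point `p` of maximal norm in `P` satisfies `⟪p, b⟫ < ‖p‖²` for every other `b ∈ P`, so for
`s < 1` close to `1` the point `s • p` satisfies `⟪s • p - p, s • p - b⟫ < 0` for all of them:
it lies in every disk `D(p, b)` and is neither `p` nor `b`. One witness thus destroys all edges
at `p`; removing `p` and recursing gives `n - 1` witnesses, the last point needing none. -/

open scoped RealInnerProductSpace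

noncomputable section

open Filter Topology

section InnerProductSpace

variable {E : Type*} [NormedAddCommGroup E] [InnerProductSpace ℝ E]

theorem dist_midpoint_sq_eq_half_dist_sq_add_inner (a b w : E) :
    dist w (midpoint ℝ a b) ^ 2 = (dist a b / 2) ^ 2 + ⟪w - a, w - b⟫ := by
  have apollonius :=
    EuclideanGeometry.dist_sq_add_dist_sq_eq_two_mul_dist_midpoint_sq_add_half_dist_sq w a b
  have hab : dist a b ^ 2 = dist w a ^ 2 + dist w b ^ 2 - 2 * ⟪w - a, w - b⟫ := by
    rw [dist_eq_norm, dist_eq_norm, dist_eq_norm, show a - b = (w - b) - (w - a) by abel,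
      norm_sub_sq_real, real_inner_comm]
    ring
  linarith

theorem mem_closedBall_midpoint_of_inner_nonpos {a b w : E} (h : ⟪w - a, w - b⟫ ≤ 0) :
    w ∈ Metric.closedBall (midpoint ℝ a b) (dist a b / 2) := by
  rw [Metric.mem_closedBall, ← pow_le_pow_iff_left₀ dist_nonneg (by positivity) two_ne_zero,
    dist_midpoint_sq_eq_half_dist_sq_add_inner]
  linarith

theorem inner_lt_norm_sq_of_norm_le {p b : E} (hb : ‖b‖ ≤ ‖p‖) (hne : b ≠ p) :
    ⟪p, b⟫ < ‖p‖ ^ 2 := by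
  have hpos : 0 < ‖p - b‖ ^ 2 := by positivity [sub_ne_zero.mpr hne.symm]
  have := pow_le_pow_left₀ (norm_nonneg b) hb 2
  rw [norm_sub_sq_real] at hpos
  linarith

theorem exists_inner_sub_neg_of_norm_le {S : Finset E} {p : E} (hpS : p ∉ S)
    (hp : ∀ b ∈ S, ‖b‖ ≤ ‖p‖) : ∃ w : E, ∀ b ∈ S, ⟪w - p, w - b⟫ < 0 := by
  have hlim : Tendsto (fun s : ℝ => s * ‖p‖ ^ 2) (𝓝[<] 1) (𝓝 (‖p‖ ^ 2)) :=
    ((continuous_mul_const _).tendsto' 1 _ (one_mul _)).mono_left nhdsWithin_le_nhds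
  have hclose : ∀ᶠ s in 𝓝[<] (1 : ℝ), ∀ b ∈ S, ⟪p, b⟫ < s * ‖p‖ ^ 2 := by
    rw [eventually_all_finset]
    exact fun b hb => hlim.eventually_const_lt
      (inner_lt_norm_sq_of_norm_le (hp b hb) (ne_of_mem_of_not_mem hb hpS))
  obtain ⟨s, hs, hs1 : s < 1⟩ := (hclose.and self_mem_nhdsWithin).exists
  refine ⟨s • p, fun b hb => ?_⟩
  have hfactor : ⟪s • p - p, s • p - b⟫ = (s - 1) * (s * ‖p‖ ^ 2 - ⟪p, b⟫) := by
    rw [show s • p - p = (s - 1) • p by rw [sub_smul, one_smul], inner_smul_left,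
      inner_sub_right, inner_smul_right, real_inner_self_eq_norm_sq]
    simp
  rw [hfactor]
  exact mul_neg_of_neg_of_pos (by linarith) (by linarith [hs b hb])

theorem exists_finset_card_le_pred_inner_sub_neg (P : Finset E) :
    ∃ W : Finset E, W.card ≤ P.card - 1 ∧
      ∀ a ∈ P, ∀ b ∈ P, a ≠ b → ∃ w ∈ W, ⟪w - a, w - b⟫ < 0 := by
  classical
  induction P using Finset.induction_on_max_value (fun x : E => ‖x‖) with
  | empty => exact ⟨∅, by simp, by simp⟩
  | insert p S hpS hp ih =>
    obtain rfl | hS := S.eq_empty_or_nonempty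
    · exact ⟨∅, by simp, by simp_all⟩
    obtain ⟨W, hWcard, hW⟩ := ih
    obtain ⟨w, hw⟩ := exists_inner_sub_neg_of_norm_le hpS hp
    refine ⟨insert w W, ?_, ?_⟩
    · have := S.card_pos.mpr hS
      rw [Finset.card_insert_of_notMem hpS]
      exact (Finset.card_insert_le w W).trans (by omega)
    · intro a ha b hb hab
      rw [Finset.exists_mem_insert]
      rcases Finset.mem_insert.mp ha with rfl | haS <;>
        rcases Finset.mem_insert.mp hb with rfl | hbS
      · exact absurd rfl hab
      · exact .inl (hw b hbS)
      · exact .inl (real_inner_comm (w - a) _ ▸ hw a haS)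
      · exact .inr (hW a haS b hbS hab)

end InnerProductSpace

theorem not_gabrielEdge_of_inner_neg {W : Set Pt} {a b w : Pt} (hw : w ∈ W)
    (h : ⟪w - a, w - b⟫ < 0) : ¬ gabrielEdge W a b := by
  have hwa : w ≠ a := by rintro rfl; simp at h
  have hwb : w ≠ b := by rintro rfl; simp at h
  intro hedge
  exact Set.eq_empty_iff_forall_notMem.mp hedge w
    ⟨⟨mem_closedBall_midpoint_of_inner_nonpos h.le, by simp [hwa, hwb]⟩, hw⟩

theorem witnesses_eliminate_all_edges_upper_bound_general
    (P : Finset Pt) (n : ℕ) (hcard : P.card = n) :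
    ∃ W : Finset Pt, W.card ≤ n - 1 ∧
      ∀ a ∈ P, ∀ b ∈ P, a ≠ b → ¬ gabrielEdge (W : Set Pt) a b := by
  obtain ⟨W, hWcard, hW⟩ := exists_finset_card_le_pred_inner_sub_neg P
  refine ⟨W, hcard ▸ hWcard, fun a ha b hb hab => ?_⟩
  obtain ⟨w, hw, hwab⟩ := hW a ha b hb hab
  exact not_gabrielEdge_of_inner_neg hw hwab

/-- `n − 1` witnesses always suffice to eliminate all edges. -/
theorem witnesses_eliminate_all_edges_upper_bound
    (P : Finset Pt) (n : ℕ) (hcard : P.card = n) (hn : 1 ≤ n) :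
    ∃ W : Finset Pt, W.card ≤ n - 1 ∧
      ∀ a ∈ P, ∀ b ∈ P, a ≠ b → ¬ gabrielEdge (W : Set Pt) a b :=
  witnesses_eliminate_all_edges_upper_bound_general P n hcard
end
end

section
/- Every complete bipartite graph can be drawn as a witness Gabriel graph: for all integers m, n ≥ 1 there exist a finite set P ⊆ ℝ², a finite set W ⊆ ℝ², and a coloring c : P → Fin 2 with |c⁻¹(0)| = m and |c⁻¹(1)| = n, such that distinct a, b ∈ P are adjacent in GG⁻(P,W) if and only if c(a) ≠ c(b). -/
open scoped RealInnerProductSpace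

noncomputable section

/-!
Put the `m` vertices of one class at `(0, i)` and the `n` of the other at `(L, j)`, with a witness
beside every vertex, half a unit up and half a unit away from the other column. The disk on two
vertices of the same column contains the witness beside the lower one. A point `w` avoids `D(a, b)`
as soon as `(w₀ - a₀)(w₀ - b₀) > (a₁ - b₁)² / 4`; for a witness and a vertex of each column the left
side is `(L + 1/2) / 2`, so every cross disk is empty once `L ≥ (m + n)²`.
-/

open Metric Finset

theorem mem_closedBall_midpoint_iff_inner_nonpos {V : Type*} [NormedAddCommGroup V]
    [InnerProductSpace ℝ V] (a b x : V) :
    x ∈ closedBall (midpoint ℝ a b) (dist a b / 2) ↔ ⟪x - a, x - b⟫ ≤ 0 := by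
  have hx : x - midpoint ℝ a b = (2 : ℝ)⁻¹ • ((x - a) + (x - b)) := by
    rw [midpoint_eq_smul_add, invOf_eq_inv]; module
  have hab : a - b = (x - b) - (x - a) := by abel
  rw [mem_closedBall, dist_eq_norm, dist_eq_norm, ← sq_le_sq₀ (norm_nonneg _) (by positivity),
    hx, hab, norm_smul, div_pow, mul_pow]
  generalize x - a = u, x - b = v
  rw [norm_add_sq_real, norm_sub_sq_real, real_inner_comm]
  norm_num
  constructor <;> intro h <;> linarith

lemma mem_diskD_iff {a b x : Pt} :
    x ∈ diskD a b ↔ (x 0 - a 0) * (x 0 - b 0) + (x 1 - a 1) * (x 1 - b 1) ≤ 0 := by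
  rw [diskD, mem_closedBall_midpoint_iff_inner_nonpos]
  simp [PiLp.inner_apply, Fin.sum_univ_two, mul_comm]

lemma notMem_diskD_of_sq_lt {a b w : Pt}
    (h : (a 1 - b 1) ^ 2 / 4 < (w 0 - a 0) * (w 0 - b 0)) : w ∉ diskD a b := by
  rw [mem_diskD_iff, not_le]
  nlinarith [sq_nonneg (2 * w 1 - a 1 - b 1)]

lemma gabrielEdge_iff {W : Set Pt} {a b : Pt} :
    gabrielEdge W a b ↔ ∀ w ∈ W, w ∈ diskD a b → w = a ∨ w = b := by
  simp only [gabrielEdge, Set.eq_empty_iff_forall_notMem, Set.mem_inter_iff, Set.mem_sdiff,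
    Set.mem_insert_iff, Set.mem_singleton_iff]
  grind

lemma gabrielEdge_comm {W : Set Pt} {a b : Pt} : gabrielEdge W a b ↔ gabrielEdge W b a := by
  rw [gabrielEdge, gabrielEdge, diskD, diskD, midpoint_comm, dist_comm, Set.pair_comm]

def column (x y₀ : ℝ) (k : ℕ) : Finset Pt := (range k).image fun i : ℕ => !₂[x, y₀ + i]

section column

variable {x y₀ : ℝ} {k : ℕ} {p : Pt}

lemma mem_column : p ∈ column x y₀ k ↔ ∃ i < k, !₂[x, y₀ + i] = p := by
  simp [column]

lemma apply_zero_of_mem_column (hp : p ∈ column x y₀ k) : p 0 = x := by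
  obtain ⟨i, -, rfl⟩ := mem_column.1 hp
  rfl

lemma card_column (x y₀ : ℝ) (k : ℕ) : (column x y₀ k).card = k := by
  rw [column, card_image_of_injective, card_range]
  intro i j hij
  simpa using congrFun (congrArg WithLp.ofLp hij) 1

end column

lemma not_gabrielEdge_of_mem_column {W : Set Pt} {x x' : ℝ} {k : ℕ} (hx : x' ≠ x)
    (hx' : (x' - x) ^ 2 ≤ 1 / 4) (hW : (column x' (1 / 2) k : Set Pt) ⊆ W) {a b : Pt}
    (ha : a ∈ column x 0 k) (hb : b ∈ column x 0 k) (hab : a ≠ b) : ¬ gabrielEdge W a b := by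
  obtain ⟨i, hi, rfl⟩ := mem_column.1 ha
  obtain ⟨j, hj, rfl⟩ := mem_column.1 hb
  wlog hij : i < j generalizing i j
  · rw [gabrielEdge_comm]
    exact this j hj hb i hi ha hab.symm (by grind)
  have hij : (i : ℝ) + 1 ≤ j := by exact_mod_cast hij
  have hw : !₂[x', 1 / 2 + i] ∈ diskD !₂[x, 0 + i] !₂[x, 0 + j] := by
    rw [mem_diskD_iff]
    simp only [Matrix.cons_val_zero, Matrix.cons_val_one]
    nlinarith
  have hw' : ∀ y : ℝ, !₂[x', 1 / 2 + i] ≠ !₂[x, y] := fun y h =>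
    hx (by simpa using congrFun (congrArg WithLp.ofLp h) 0)
  rw [gabrielEdge_iff]
  intro h
  exact (h _ (hW (mem_coe.2 (mem_column.2 ⟨i, hi, rfl⟩))) hw).elim (hw' _) (hw' _)

lemma gabrielEdge_of_mem_columns {W : Set Pt} {m n : ℕ} {L : ℝ} (hL : ((m : ℝ) + n) ^ 2 ≤ L)
    (hW : ∀ w ∈ W, w 0 = -1 / 2 ∨ w 0 = L + 1 / 2) {a b : Pt}
    (ha : a ∈ column 0 0 m) (hb : b ∈ column L 0 n) : gabrielEdge W a b := by
  obtain ⟨i, hi, rfl⟩ := mem_column.1 ha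
  obtain ⟨j, hj, rfl⟩ := mem_column.1 hb
  have hi : (i : ℝ) + 1 ≤ m := by exact_mod_cast hi
  have hj : (j : ℝ) + 1 ≤ n := by exact_mod_cast hj
  have hij : ((i : ℝ) - j) ^ 2 ≤ L :=
    (sq_le_sq' (by linarith [j.cast_nonneg (α := ℝ)]) (by linarith [i.cast_nonneg (α := ℝ)])).trans hL
  rw [gabrielEdge_iff]
  intro w hw hwD
  refine absurd hwD (notMem_diskD_of_sq_lt ?_)
  simp only [Matrix.cons_val_zero, Matrix.cons_val_one, zero_add]
  rcases hW w hw with h | h <;> rw [h] <;> nlinarith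

theorem complete_bipartite_witness_gabriel_drawable_general
    (m n : ℕ) :
    ∃ (P W : Finset Pt) (c : Pt → Fin 2),
      (P.filter (fun p => c p = 0)).card = m ∧
      (P.filter (fun p => c p = 1)).card = n ∧
      ∀ a ∈ P, ∀ b ∈ P, a ≠ b →
        (gabrielEdge (W : Set Pt) a b ↔ c a ≠ c b) := by
  set L : ℝ := ((m : ℝ) + n) ^ 2 + 1
  have hL : ((m : ℝ) + n) ^ 2 ≤ L := le_add_of_nonneg_right zero_le_one
  set c : Pt → Fin 2 := fun p => if p 0 = 0 then 0 else 1
  have hc0 {p : Pt} (hp : p ∈ column 0 0 m) : c p = 0 := if_pos (apply_zero_of_mem_column hp)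
  have hc1 {p : Pt} (hp : p ∈ column L 0 n) : c p = 1 :=
    if_neg (by rw [apply_zero_of_mem_column hp]; positivity)
  have hW : ∀ w ∈ (column (-1 / 2) (1 / 2) m ∪ column (L + 1 / 2) (1 / 2) n : Finset Pt),
      w 0 = -1 / 2 ∨ w 0 = L + 1 / 2 := fun w hw =>
    (mem_union.1 hw).imp apply_zero_of_mem_column apply_zero_of_mem_column
  refine ⟨column 0 0 m ∪ column L 0 n, column (-1 / 2) (1 / 2) m ∪ column (L + 1 / 2) (1 / 2) n,
    c, ?_, ?_, ?_⟩
  · rw [filter_union, filter_true_of_mem fun p hp => hc0 hp,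
      filter_false_of_mem fun p hp => by simp [hc1 hp], union_empty, card_column]
  · rw [filter_union, filter_false_of_mem fun p hp => by simp [hc0 hp],
      filter_true_of_mem fun p hp => hc1 hp, empty_union, card_column]
  · intro a ha b hb hab
    rcases mem_union.1 ha with ha | ha <;> rcases mem_union.1 hb with hb | hb
    · refine iff_of_false (not_gabrielEdge_of_mem_column (x' := -1 / 2) (by norm_num) (by norm_num)
        subset_union_left ha hb hab) (by simp [hc0 ha, hc0 hb])
    · exact iff_of_true (gabrielEdge_of_mem_columns hL hW ha hb) (by simp [hc0 ha, hc1 hb])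
    · exact iff_of_true (gabrielEdge_comm.1 (gabrielEdge_of_mem_columns hL hW hb ha))
        (by simp [hc1 ha, hc0 hb])
    · refine iff_of_false (not_gabrielEdge_of_mem_column (x' := L + 1 / 2) (by simp) (by norm_num)
        subset_union_right ha hb hab) (by simp [hc1 ha, hc1 hb])

/-- Every complete bipartite graph `K_{m,n}` can be drawn as a witness
Gabriel graph. -/
theorem complete_bipartite_witness_gabriel_drawable
    (m n : ℕ) (hm : 1 ≤ m) (hn : 1 ≤ n) :
    ∃ (P W : Finset Pt) (c : Pt → Fin 2),
      (P.filter (fun p => c p = 0)).card = m ∧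
      (P.filter (fun p => c p = 1)).card = n ∧
      ∀ a ∈ P, ∀ b ∈ P, a ≠ b →
        (gabrielEdge (W : Set Pt) a b ↔ c a ≠ c b) :=
  complete_bipartite_witness_gabriel_drawable_general m n
end
end

section
/- Let m ≥ 3 and let q : Fin m → ℝ² be points in counterclockwise convex position, and let B ⊆ Fin m (the 'black' indices) be nonempty and such that no two cyclically consecutive indices both belong to B (for no i are both i and i+1 (mod m) in B). Then there exists a family T of m − 2 three-element subsets of Fin m such that: each t ∈ T contains exactly one index of B; the triangles convexHull{q(i) : i ∈ t}, t ∈ T, have pairwise disjoint interiors; and the union of these triangles equals convexHull{q(0), …, q(m−1)}. -/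
/-!
Ear cutting. If `0 < v < m - 1`, the diagonal from `q (v - 1)` to `q (v + 1)` separates `q v`
from all other vertices, so the hull of the polygon is the triangle `q (v - 1), q v, q (v + 1)`
together with the hull of the remaining `m - 1` vertices, the two meeting along the diagonal.
Take `v` black when there are at least two black vertices (one of them avoids the pair `0`,
`m - 1`, which is cyclically consecutive), and next to the only black vertex otherwise. Then the
triangle has exactly one black vertex, and the remaining polygon still has a nonempty set of
black vertices, no two of them cyclically consecutive: induct on `m`.
-/

open scoped RealInnerProductSpace

noncomputable section

open Topology

def orient (a b c : Pt) : ℝ := det2 (b - a) (c - a)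

lemma orient_rotate (a b c : Pt) : orient a b c = orient b c a := by
  simp only [orient, det2, PiLp.sub_apply]; ring

lemma orient_swap (a b c : Pt) : orient a c b = -orient a b c := by
  simp only [orient, det2, PiLp.sub_apply]; ring

@[simp] lemma orient_self_left (a b : Pt) : orient a b a = 0 := by
  simp only [orient, det2, PiLp.sub_apply]; ring

@[simp] lemma orient_self_right (a b : Pt) : orient a b b = 0 := by
  simp only [orient, det2, PiLp.sub_apply]; ring

lemma orient_add_smul {α β : ℝ} (h : α + β = 1) (a b x y : Pt) :
    orient a b (α • x + β • y) = α * orient a b x + β * orient a b y := by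
  rw [← sub_eq_iff_eq_add'.mpr h.symm]
  simp only [orient, det2, PiLp.sub_apply, PiLp.add_apply, PiLp.smul_apply, smul_eq_mul]; ring

lemma orient_add_orient_add_orient (p a s x : Pt) :
    orient x a s + orient p x s + orient p a x = orient p a s := by
  simp only [orient, det2, PiLp.sub_apply]; ring

lemma orient_smul_eq_barycentric (p a s x : Pt) :
    orient p a s • x = orient x a s • p + orient p x s • a + orient p a x • s := by
  ext i
  fin_cases i <;>
    simp only [orient, det2, Fin.zero_eta, Fin.mk_one, PiLp.add_apply, PiLp.sub_apply,
      PiLp.smul_apply, smul_eq_mul] <;> ring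

lemma convex_setOf_orient_nonneg (a b : Pt) : Convex ℝ {x | 0 ≤ orient a b x} := by
  intro x hx y hy α β hα hβ hαβ
  simp only [Set.mem_ofPred_eq, orient_add_smul hαβ] at *
  positivity

lemma convex_setOf_orient_nonpos (a b : Pt) : Convex ℝ {x | orient a b x ≤ 0} := by
  intro x hx y hy α β hα hβ hαβ
  simp only [Set.mem_ofPred_eq, orient_add_smul hαβ] at *
  nlinarith

lemma mem_convexHull_triple_of_orient_nonneg {p a s x : Pt} (h : 0 < orient p a s)
    (hp : 0 ≤ orient x a s) (ha : 0 ≤ orient p x s) (hs : 0 ≤ orient p a x) :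
    x ∈ convexHull ℝ {p, a, s} := by
  have hx : x = (orient x a s / orient p a s) • p + (orient p x s / orient p a s) • a +
      (orient p a x / orient p a s) • s := by
    simp only [div_eq_inv_mul, mul_smul, ← smul_add, ← orient_smul_eq_barycentric,
      inv_smul_smul₀ h.ne']
  have hmem := (convex_convexHull ℝ ({p, a, s} : Set Pt)).sum_mem (t := Finset.univ)
    (w := ![orient x a s / orient p a s, orient p x s / orient p a s, orient p a x / orient p a s])
    (z := ![p, a, s])
    (by intro i _; fin_cases i <;> simp only [Fin.reduceFinMk, Matrix.cons_val] <;> positivity)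
    (by
      simp only [Fin.sum_univ_three, Matrix.cons_val]
      field_simp
      linarith [orient_add_orient_add_orient p a s x])
    (by intro i _; fin_cases i <;> exact subset_convexHull ℝ _ (by simp))
  simpa only [Fin.sum_univ_three, Matrix.cons_val, ← hx] using hmem

lemma mem_segment_of_orient_eq_zero {p a s x : Pt} (h : 0 < orient p a s)
    (hp : 0 ≤ orient x a s) (ha : orient p x s = 0) (hs : 0 ≤ orient p a x) :
    x ∈ segment ℝ p s := by
  refine ⟨orient x a s / orient p a s, orient p a x / orient p a s, by positivity, by positivity,
    ?_, ?_⟩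
  · field_simp; linarith [orient_add_orient_add_orient p a s x]
  · have := orient_smul_eq_barycentric p a s x
    rw [ha, zero_smul, add_zero] at this
    simp only [div_eq_inv_mul, mul_smul, ← smul_add, ← this, inv_smul_smul₀ h.ne']

lemma interior_setOf_orient_eq_zero {p s a : Pt} (ha : orient p s a ≠ 0) :
    interior {x | orient p s x = 0} = ∅ := by
  refine Set.eq_empty_of_forall_notMem fun x hx => ?_
  have hcont : Continuous fun ε : ℝ => (1 - ε) • x + ε • a := by fun_prop
  have hnear : ∀ᶠ ε in 𝓝[>] (0 : ℝ), (1 - ε) • x + ε • a ∈ {x | orient p s x = 0} :=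
    nhdsWithin_le_nhds <|
      (hcont.tendsto' 0 x (by simp)).eventually (mem_interior_iff_mem_nhds.mp hx)
  obtain ⟨ε, hε, hpos⟩ := (hnear.and self_mem_nhdsWithin).exists
  rw [Set.mem_ofPred_eq, orient_add_smul (by ring), interior_subset hx] at hε
  simp only [mul_zero, zero_add, mul_eq_zero] at hε
  exact hε.elim (ne_of_gt hpos) ha

namespace CCWConvexPos

variable {m : ℕ} {q : Fin m → Pt} {i j k : Fin m}

lemma comp_strictMono {l : ℕ} (hq : CCWConvexPos q) {f : Fin l → Fin m} (hf : StrictMono f) :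
    CCWConvexPos (q ∘ f) :=
  fun _ _ _ hij hjk => hq _ _ _ (hf hij) (hf hjk)

lemma orient_nonneg (hq : CCWConvexPos q) (hij : i < j) (hk : ¬(i < k ∧ k < j)) :
    0 ≤ orient (q i) (q j) (q k) := by
  rcases lt_trichotomy k i with hki | rfl | hik
  · rw [← orient_rotate]; exact (hq k i j hki hij).le
  · simp
  rcases lt_trichotomy j k with hjk | rfl | hkj
  · exact (hq i j k hij hjk).le
  · simp
  · exact absurd ⟨hik, hkj⟩ hk

lemma orient_nonneg_of_mem_convexHull (hq : CCWConvexPos q) (hij : i < j)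
    {S : Set (Fin m)} (hS : ∀ l ∈ S, ¬(i < l ∧ l < j)) {x : Pt}
    (hx : x ∈ convexHull ℝ (q '' S)) : 0 ≤ orient (q i) (q j) x := by
  refine convexHull_min ?_ (convex_setOf_orient_nonneg _ _) hx
  rintro _ ⟨l, hl, rfl⟩
  exact hq.orient_nonneg hij (hS l hl)

lemma convexHull_range_eq_union_ear (hq : CCWConvexPos q) (hij : (i : ℕ) + 1 = j)
    (hjk : (j : ℕ) + 1 = k) :
    convexHull ℝ (Set.range q) = convexHull ℝ (q '' {j}ᶜ) ∪ convexHull ℝ {q i, q j, q k} := by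
  have hpas : 0 < orient (q i) (q j) (q k) :=
    hq i j k (Fin.lt_def.2 (by omega)) (Fin.lt_def.2 (by omega))
  have hrange : Set.range q = q '' Set.univ := Set.image_univ.symm
  have edge_ij : ∀ x ∈ convexHull ℝ (Set.range q), 0 ≤ orient (q i) (q j) x := fun x hx =>
    hq.orient_nonneg_of_mem_convexHull (Fin.lt_def.2 (by omega))
      (fun l _ => by simp only [Fin.lt_def]; omega) (hrange ▸ hx)
  have edge_jk : ∀ x ∈ convexHull ℝ (Set.range q), 0 ≤ orient (q j) (q k) x := fun x hx =>
    hq.orient_nonneg_of_mem_convexHull (Fin.lt_def.2 (by omega))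
      (fun l _ => by simp only [Fin.lt_def]; omega) (hrange ▸ hx)
  have hqi : q i ∈ q '' {j}ᶜ :=
    ⟨i, by rw [Set.mem_compl_singleton_iff, ne_eq, Fin.ext_iff]; omega, rfl⟩
  have hqk : q k ∈ q '' {j}ᶜ :=
    ⟨k, by rw [Set.mem_compl_singleton_iff, ne_eq, Fin.ext_iff]; omega, rfl⟩
  refine subset_antisymm (fun y hy => ?_) (Set.union_subset
    (convexHull_mono (Set.image_subset_range _ _))
    (convexHull_mono (by simp [Set.insert_subset_iff])))
  have hinsert : Set.range q = insert (q j) (q '' {j}ᶜ) := by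
    rw [hrange, ← Set.union_compl_self {j}, Set.image_union, Set.image_singleton, Set.insert_eq]
  obtain ⟨_, rfl, x, hx, hyx⟩ := (mem_convexJoin).1
    ((hinsert ▸ convexHull_insert ⟨_, hqi⟩ : convexHull ℝ (Set.range q) = _) ▸ hy)
  by_cases hy_side : orient (q i) (q k) y ≤ 0
  · refine Or.inr (mem_convexHull_triple_of_orient_nonneg hpas ?_ ?_ (edge_ij y hy))
    · rw [orient_rotate]; exact edge_jk y hy
    · rw [orient_swap]; linarith
  rw [not_le] at hy_side
  have ha_side : orient (q i) (q k) (q j) < 0 := by rw [orient_swap]; linarith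
  -- `w` is where the segment from `q j` to `y` crosses the diagonal `q i q k`
  set d := orient (q i) (q k) y - orient (q i) (q k) (q j)
  have hd : 0 < d := by linarith
  set w := (orient (q i) (q k) y / d) • q j + (-orient (q i) (q k) (q j) / d) • y
  have hw_sum : orient (q i) (q k) y / d + -orient (q i) (q k) (q j) / d = 1 := by
    field_simp; ring
  have hw_seg : w ∈ segment ℝ (q j) y :=
    ⟨_, _, by positivity, div_nonneg (by linarith) hd.le, hw_sum, rfl⟩
  have hw_diag : orient (q i) (q k) w = 0 := by
    rw [orient_add_smul hw_sum]; field_simp; ring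
  have hw_hull : w ∈ convexHull ℝ (Set.range q) :=
    (convex_convexHull ℝ _).segment_subset (subset_convexHull ℝ _ (Set.mem_range_self j)) hy hw_seg
  have hw_R : w ∈ convexHull ℝ (q '' {j}ᶜ) := by
    refine (convex_convexHull ℝ _).segment_subset (subset_convexHull ℝ _ hqi)
      (subset_convexHull ℝ _ hqk) (mem_segment_of_orient_eq_zero hpas ?_ ?_ (edge_ij w hw_hull))
    · rw [orient_rotate]; exact edge_jk w hw_hull
    · rw [orient_swap, hw_diag, neg_zero]
  have hy_wx : y ∈ segment ℝ w x := mem_segment_iff_wbtw.2 <|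
    (mem_segment_iff_wbtw.1 hyx).trans_left_right (mem_segment_iff_wbtw.1 hw_seg)
  exact Or.inl ((convex_convexHull ℝ _).segment_subset hw_R hx hy_wx)

lemma interior_inter_interior_ear (hq : CCWConvexPos q) (hij : (i : ℕ) + 1 = j)
    (hjk : (j : ℕ) + 1 = k) :
    interior (convexHull ℝ (q '' {j}ᶜ)) ∩ interior (convexHull ℝ {q i, q j, q k}) = ∅ := by
  have ha_side : orient (q i) (q k) (q j) < 0 := by
    rw [orient_swap, neg_neg_iff_pos]
    exact hq i j k (Fin.lt_def.2 (by omega)) (Fin.lt_def.2 (by omega))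
  have hR : convexHull ℝ (q '' {j}ᶜ) ⊆ {x | 0 ≤ orient (q i) (q k) x} := fun x hx =>
    hq.orient_nonneg_of_mem_convexHull (Fin.lt_def.2 (by omega))
      (fun l hl => by
        rw [Set.mem_compl_singleton_iff, ne_eq, Fin.ext_iff] at hl
        rw [Fin.lt_def, Fin.lt_def]; omega) hx
  have htri : convexHull ℝ {q i, q j, q k} ⊆ {x | orient (q i) (q k) x ≤ 0} :=
    convexHull_min (by simp [Set.insert_subset_iff, ha_side.le]) (convex_setOf_orient_nonpos _ _)
  refine Set.eq_empty_of_subset_empty ?_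
  calc interior (convexHull ℝ (q '' {j}ᶜ)) ∩ interior (convexHull ℝ {q i, q j, q k})
      ⊆ interior ({x | 0 ≤ orient (q i) (q k) x} ∩ {x | orient (q i) (q k) x ≤ 0}) := by
        rw [interior_inter]; exact Set.inter_subset_inter (interior_mono hR) (interior_mono htri)
    _ = interior {x | orient (q i) (q k) x = 0} := by
        congr 1; ext x; exact ⟨fun h => le_antisymm h.2 h.1, fun h => ⟨h.ge, h.le⟩⟩
    _ = ∅ := interior_setOf_orient_eq_zero ha_side.ne

end CCWConvexPos

namespace Fin

variable {n : ℕ}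

lemma val_succAbove (v : Fin (n + 1)) (j : Fin n) :
    (v.succAbove j : ℕ) = if (j : ℕ) < v then (j : ℕ) else (j : ℕ) + 1 := by
  unfold succAbove; split_ifs <;> simp_all [lt_def]

lemma val_sub_one_of_pos {v : Fin (n + 1)} (hv : 0 < (v : ℕ)) :
    ((v - 1 : Fin (n + 1)) : ℕ) = v - 1 :=
  val_sub_one_of_ne_zero fun h => by simp [h] at hv

lemma val_add_one_of_val_lt {v : Fin (n + 1)} (hv : (v : ℕ) < n) :
    ((v + 1 : Fin (n + 1)) : ℕ) = v + 1 :=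
  val_add_one_of_lt (lt_def.2 (by simpa using hv))

lemma succAbove_add_one {v : Fin (n + 2)} (hv0 : 0 < (v : ℕ)) (hvn : (v : ℕ) < n + 1)
    (j : Fin (n + 1)) :
    v.succAbove (j + 1) = v.succAbove j + 1 ∨
      (v.succAbove j = v - 1 ∧ v.succAbove (j + 1) = v + 1) := by
  simp only [Fin.ext_iff, val_succAbove, val_add_one, coe_sub_one, val_last, val_zero]
  split_ifs <;> omega

end Fin

section Coloring

variable {n : ℕ} {B : Finset (Fin (n + 2))}

lemma succAbove_add_one_notMem (hsep : ∀ i ∈ B, i + 1 ∉ B) {v : Fin (n + 2)}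
    (hv0 : 0 < (v : ℕ)) (hvn : (v : ℕ) < n + 1) (hv : ¬(v - 1 ∈ B ∧ v + 1 ∈ B))
    {j : Fin (n + 1)} (hj : v.succAbove j ∈ B) : v.succAbove (j + 1) ∉ B := by
  rcases Fin.succAbove_add_one hv0 hvn j with h | ⟨h1, h2⟩
  · exact h ▸ hsep _ hj
  · exact h2 ▸ fun h => hv ⟨h1 ▸ hj, h⟩

lemma exists_mem_pos_lt_of_one_lt_card (hsep : ∀ i ∈ B, i + 1 ∉ B) (hcard : 1 < B.card) :
    ∃ v ∈ B, 0 < (v : ℕ) ∧ (v : ℕ) < n + 1 := by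
  by_contra! hend
  have hends : ∀ x ∈ B, x = 0 ∨ x = Fin.last (n + 1) := fun x hx => by
    rcases Nat.eq_zero_or_pos x with h | h
    · exact Or.inl (Fin.ext h)
    · exact Or.inr (Fin.ext (by have := hend x hx h; rw [Fin.val_last]; omega))
  obtain ⟨a, ha, b, hb, hab⟩ := Finset.one_lt_card.1 hcard
  have hlast : Fin.last (n + 1) + 1 = 0 := by simp
  rcases hends a ha with rfl | rfl <;> rcases hends b hb with rfl | rfl
  exacts [hab rfl, hsep _ hb (hlast ▸ ha), hsep _ ha (hlast ▸ hb), hab rfl]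

lemma exists_pos_lt_and_eq_sub_one_or_eq_add_one (hn : 2 ≤ n) (b : Fin (n + 2)) :
    ∃ v : Fin (n + 2), 0 < (v : ℕ) ∧ (v : ℕ) < n + 1 ∧ (b = v - 1 ∨ b = v + 1) := by
  rcases Nat.lt_or_ge (b : ℕ) n with hb | hb
  · have hb' : ((b + 1 : Fin (n + 2)) : ℕ) = b + 1 := Fin.val_add_one_of_val_lt (by omega)
    exact ⟨b + 1, by omega, by omega, Or.inl (add_sub_cancel_right b 1).symm⟩
  · have hb' : ((b - 1 : Fin (n + 2)) : ℕ) = b - 1 := Fin.val_sub_one_of_pos (by omega)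
    exact ⟨b - 1, by omega, by omega, Or.inr (sub_add_cancel b 1).symm⟩

lemma exists_ear (hn : 2 ≤ n) (hB : B.Nonempty) (hsep : ∀ i ∈ B, i + 1 ∉ B) :
    ∃ v : Fin (n + 2), 0 < (v : ℕ) ∧ (v : ℕ) < n + 1 ∧
      (({v - 1, v, v + 1} : Finset (Fin (n + 2))) ∩ B).card = 1 ∧
      (∃ b ∈ B, b ≠ v) ∧ ¬(v - 1 ∈ B ∧ v + 1 ∈ B) := by
  rcases Nat.lt_or_ge 1 B.card with hcard | hcard
  · obtain ⟨v, hvB, hv0, hvn⟩ := exists_mem_pos_lt_of_one_lt_card hsep hcard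
    have hprev : v - 1 ∉ B := fun h => hsep _ h (by rwa [sub_add_cancel])
    have hnext : v + 1 ∉ B := hsep v hvB
    refine ⟨v, hv0, hvn, Finset.card_eq_one.2 ⟨v, ?_⟩, Finset.exists_mem_ne hcard v,
      fun h => hprev h.1⟩
    ext x
    simp only [Finset.mem_inter, Finset.mem_insert, Finset.mem_singleton]
    constructor
    · rintro ⟨rfl | rfl | rfl, hx⟩ <;> first | rfl | contradiction
    · rintro rfl; exact ⟨Or.inr (Or.inl rfl), hvB⟩
  · obtain ⟨b, rfl⟩ := Finset.card_eq_one.1 (le_antisymm hcard (Finset.card_pos.2 hB))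
    obtain ⟨v, hv0, hvn, hb⟩ := exists_pos_lt_and_eq_sub_one_or_eq_add_one hn b
    refine ⟨v, hv0, hvn, ?_, ⟨b, Finset.mem_singleton_self b, by rcases hb with rfl | rfl <;> simp⟩,
      ?_⟩
    · rw [Finset.inter_singleton_of_mem (by rcases hb with rfl | rfl <;> simp),
        Finset.card_singleton]
    · rintro ⟨h1, h2⟩
      have := congrArg Fin.val ((Finset.mem_singleton.1 h1).trans (Finset.mem_singleton.1 h2).symm)
      rw [Fin.val_sub_one_of_pos hv0, Fin.val_add_one_of_val_lt hvn] at this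
      omega

end Coloring

def IsTiling {ι : Type*} (q : ι → Pt) (T : Finset (Finset ι)) (K : Set Pt) : Prop :=
  (∀ t₁ ∈ T, ∀ t₂ ∈ T, t₁ ≠ t₂ →
    interior (convexHull ℝ (q '' (t₁ : Set ι))) ∩ interior (convexHull ℝ (q '' (t₂ : Set ι))) = ∅) ∧
  (⋃ t ∈ T, convexHull ℝ (q '' (t : Set ι))) = K

namespace IsTiling

variable {ι κ : Type*} {q : ι → Pt} {T : Finset (Finset ι)} {K : Set Pt}

lemma singleton (q : ι → Pt) (t : Finset ι) : IsTiling q {t} (convexHull ℝ (q '' t)) :=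
  ⟨by simp_all, by simp⟩

lemma map (e : κ ↪ ι) {T : Finset (Finset κ)} (h : IsTiling (q ∘ e) T K) :
    IsTiling q (T.map (Finset.mapEmbedding e).toEmbedding) K := by
  have himage (t : Finset κ) : q '' ↑(t.map e) = (q ∘ e) '' ↑t := by
    rw [Finset.coe_map, Set.image_comp]
  refine ⟨?_, ?_⟩
  · simp only [Finset.mem_map, RelEmbedding.coe_toEmbedding, Finset.mapEmbedding_apply]
    rintro _ ⟨t₁, h₁, rfl⟩ _ ⟨t₂, h₂, rfl⟩ hne
    rw [himage, himage]
    exact h.1 t₁ h₁ t₂ h₂ (fun h => hne (h ▸ rfl))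
  · classical
    rw [← h.2, Finset.map_eq_image, Finset.set_biUnion_finset_image]
    simp only [RelEmbedding.coe_toEmbedding, Finset.mapEmbedding_apply, himage]

lemma insert [DecidableEq ι] (h : IsTiling q T K) (t : Finset ι)
    (ht : interior K ∩ interior (convexHull ℝ (q '' t)) = ∅) :
    IsTiling q (insert t T) (K ∪ convexHull ℝ (q '' t)) := by
  have hsub (s) (hs : s ∈ T) : interior (convexHull ℝ (q '' ↑s)) ⊆ interior K :=
    interior_mono <| h.2 ▸
      Set.subset_iUnion₂ (s := fun (t : Finset ι) (_ : t ∈ T) => convexHull ℝ (q '' ↑t)) s hs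
  refine ⟨?_, by rw [Finset.set_biUnion_insert, h.2, Set.union_comm]⟩
  simp only [Finset.mem_insert]
  rintro t₁ (rfl | h₁) t₂ (rfl | h₂) hne
  · exact absurd rfl hne
  · exact Set.eq_empty_of_subset_empty
      (Set.inter_comm _ _ ▸ ht ▸ Set.inter_subset_inter_left _ (hsub t₂ h₂))
  · exact Set.eq_empty_of_subset_empty (ht ▸ Set.inter_subset_inter_left _ (hsub t₁ h₁))
  · exact h.1 t₁ h₁ t₂ h₂ hne

end IsTiling

section InsertEar

variable {n : ℕ}

def insertEar (v : Fin (n + 2)) (T : Finset (Finset (Fin (n + 1)))) :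
    Finset (Finset (Fin (n + 2))) :=
  insert {v - 1, v, v + 1} (T.map (Finset.mapEmbedding (Fin.succAboveEmb v)).toEmbedding)

lemma card_insertEar (v : Fin (n + 2)) (T : Finset (Finset (Fin (n + 1)))) :
    (insertEar v T).card = T.card + 1 := by
  rw [insertEar, Finset.card_insert_of_notMem, Finset.card_map]
  intro h
  obtain ⟨t, -, ht⟩ := Finset.mem_map.1 h
  obtain ⟨j, -, hj⟩ := Finset.mem_map.1 (show v ∈ t.map (Fin.succAboveEmb v) by simp_all)
  exact Fin.succAbove_ne v j hj

lemma card_map_succAboveEmb_inter (v : Fin (n + 2)) (t : Finset (Fin (n + 1)))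
    (B : Finset (Fin (n + 2))) :
    (t.map (Fin.succAboveEmb v) ∩ B).card = (t ∩ Finset.univ.filter (v.succAbove · ∈ B)).card := by
  rw [← Finset.card_map (Fin.succAboveEmb v)]
  congr 1
  ext x
  simp only [Finset.mem_inter, Finset.mem_map, Finset.mem_filter, Finset.mem_univ, true_and,
    Fin.coe_succAboveEmb]
  constructor
  · rintro ⟨⟨j, hj, rfl⟩, hB⟩; exact ⟨j, ⟨hj, hB⟩, rfl⟩
  · rintro ⟨j, ⟨hj, hB⟩, rfl⟩; exact ⟨⟨j, hj, rfl⟩, hB⟩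

lemma card_eq_three_and_card_inter_eq_one_of_mem_insertEar {v : Fin (n + 2)}
    (hv0 : 0 < (v : ℕ)) (hvn : (v : ℕ) < n + 1) {B : Finset (Fin (n + 2))}
    (hear : (({v - 1, v, v + 1} : Finset (Fin (n + 2))) ∩ B).card = 1)
    {T : Finset (Finset (Fin (n + 1)))}
    (hT : ∀ t ∈ T, t.card = 3 ∧ (t ∩ Finset.univ.filter (v.succAbove · ∈ B)).card = 1) :
    ∀ t ∈ insertEar v T, t.card = 3 ∧ (t ∩ B).card = 1 := by
  have hvi : ((v - 1 : Fin (n + 2)) : ℕ) = v - 1 := Fin.val_sub_one_of_pos hv0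
  have hvk : ((v + 1 : Fin (n + 2)) : ℕ) = v + 1 := Fin.val_add_one_of_val_lt hvn
  intro t ht
  rcases Finset.mem_insert.1 ht with rfl | ht
  · refine ⟨Finset.card_eq_three.2 ⟨_, _, _, ?_, ?_, ?_, rfl⟩, hear⟩ <;>
      exact fun h => by have := congrArg Fin.val h; omega
  obtain ⟨s, hs, rfl⟩ := Finset.mem_map.1 ht
  simp only [RelEmbedding.coe_toEmbedding, Finset.mapEmbedding_apply, Finset.card_map,
    card_map_succAboveEmb_inter]
  exact hT s hs

lemma IsTiling.insertEar {q : Fin (n + 2) → Pt} (hq : CCWConvexPos q) {v : Fin (n + 2)}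
    (hv0 : 0 < (v : ℕ)) (hvn : (v : ℕ) < n + 1) {T : Finset (Finset (Fin (n + 1)))}
    (hT : IsTiling (q ∘ v.succAbove) T (convexHull ℝ (Set.range (q ∘ v.succAbove)))) :
    IsTiling q (insertEar v T) (convexHull ℝ (Set.range q)) := by
  have hvi : ((v - 1 : Fin (n + 2)) : ℕ) = v - 1 := Fin.val_sub_one_of_pos hv0
  have hvk : ((v + 1 : Fin (n + 2)) : ℕ) = v + 1 := Fin.val_add_one_of_val_lt hvn
  have hK : convexHull ℝ (Set.range (q ∘ v.succAbove)) = convexHull ℝ (q '' {v}ᶜ) := by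
    rw [Set.range_comp, Fin.range_succAbove]
  have htri : q '' ↑({v - 1, v, v + 1} : Finset (Fin (n + 2))) = {q (v - 1), q v, q (v + 1)} := by
    simp [Set.image_insert_eq]
  have := (hT.map (Fin.succAboveEmb v)).insert {v - 1, v, v + 1} (by
    rw [hK, htri]; exact hq.interior_inter_interior_ear (by omega) (by omega))
  rwa [hK, htri, ← hq.convexHull_range_eq_union_ear (by omega) (by omega)] at this

theorem exists_triangulation_one_black (n : ℕ) (hn : 2 ≤ n) (q : Fin (n + 1) → Pt)
    (hq : CCWConvexPos q) (B : Finset (Fin (n + 1))) (hB : B.Nonempty)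
    (hsep : ∀ i ∈ B, i + 1 ∉ B) :
    ∃ T : Finset (Finset (Fin (n + 1))), T.card = n - 1 ∧
      (∀ t ∈ T, t.card = 3 ∧ (t ∩ B).card = 1) ∧ IsTiling q T (convexHull ℝ (Set.range q)) := by
  induction n, hn using Nat.le_induction with
  | base =>
    have hB1 : B.card = 1 := by
      refine le_antisymm (Finset.card_le_one.2 fun a ha b hb => ?_) (Finset.card_pos.2 hB)
      have : ∀ a b : Fin 3, b = a + 1 ∨ a = b + 1 ∨ a = b := by decide
      rcases this a b with rfl | rfl | h
      exacts [absurd hb (hsep a ha), absurd ha (hsep b hb), h]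
    refine ⟨{Finset.univ}, rfl, by simpa using hB1, ?_⟩
    simpa using IsTiling.singleton q Finset.univ
  | succ n hn ih =>
    obtain ⟨v, hv0, hvn, hear, ⟨b, hb, hbv⟩, hv⟩ := exists_ear hn hB hsep
    obtain ⟨T, hTcard, hTcol, hTtile⟩ := ih (q ∘ v.succAbove)
      (hq.comp_strictMono (Fin.strictMono_succAbove v)) (Finset.univ.filter (v.succAbove · ∈ B))
      ((Fin.exists_succAbove_eq hbv).imp fun j hj => by simpa [hj] using hb)
      (fun j hj => by
        simp only [Finset.mem_filter, Finset.mem_univ, true_and] at hj ⊢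
        exact succAbove_add_one_notMem hsep hv0 hvn hv hj)
    exact ⟨insertEar v T, by rw [card_insertEar, hTcard]; omega,
      card_eq_three_and_card_inter_eq_one_of_mem_insertEar hv0 hvn hear hTcol,
      hTtile.insertEar hq hv0 hvn⟩

end InsertEar

lemma cyclicSucc_eq_add_one {n : ℕ} (h : 0 < n + 1) (i : Fin (n + 1)) : cyclicSucc h i = i + 1 :=
  Fin.ext (by simp [cyclicSucc, Fin.val_add])

/-- A convex polygon whose vertices are 2-or-more colored with no two
cyclically consecutive black vertices admits a triangulation in which every triangle has
exactly one black vertex. -/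
theorem bichromatic_triangulation
    {m : ℕ} (hm : 3 ≤ m) (q : Fin m → Pt) (hconv : CCWConvexPos q)
    (B : Finset (Fin m)) (hBne : B.Nonempty)
    (hnoconsec : ∀ i : Fin m, ¬ (i ∈ B ∧ cyclicSucc (by omega) i ∈ B)) :
    ∃ T : Finset (Finset (Fin m)),
      T.card = m - 2 ∧
      (∀ t ∈ T, t.card = 3 ∧ (t ∩ B).card = 1) ∧
      (∀ t₁ ∈ T, ∀ t₂ ∈ T, t₁ ≠ t₂ →
        interior (convexHull ℝ (q '' (t₁ : Set (Fin m)))) ∩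
          interior (convexHull ℝ (q '' (t₂ : Set (Fin m)))) = ∅) ∧
      (⋃ t ∈ T, convexHull ℝ (q '' (t : Set (Fin m)))) = convexHull ℝ (Set.range q) := by
  obtain ⟨n, rfl⟩ : ∃ n, m = n + 1 := ⟨m - 1, by omega⟩
  obtain ⟨T, hcard, hcol, htiling⟩ := exists_triangulation_one_black n (by omega) q hconv B hBne
    fun i hi hi1 => hnoconsec i ⟨hi, (cyclicSucc_eq_add_one _ i).symm ▸ hi1⟩
  exact ⟨T, by omega, hcol, htiling⟩
end
end

section
/- Let (P, W, c) be a witness Gabriel drawing of the complete 4-partite graph K_{2,2,2,2}, i.e., c : P → Fin 4 with every color class of size exactly 2 (so |P| = 8), with P ∪ W in general position. Then no witness lies in the interior of the convex hull of P: W ∩ interior(convexHull P) = ∅. -/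
open scoped RealInnerProductSpace

noncomputable section

/-!
Let `w` be a witness inside the hull. For vertices `p, q` of different colours the edge `pq`
forces `w` outside the disk on diameter `pq`, i.e. the angle `p w q` is acute. Since `w` is an
interior point, every vertex `x ≠ w` has some vertex `x'` with `x w x'` obtuse, and `x'` must
then share the colour of `x`. Two colours other than that of `w` thus give pairs `a, a'` and
`b, b'` with both `a w a'` and `b w b'` obtuse but all four angles between them acute, which is
impossible in the plane.
-/

open Topology

theorem mem_diskD_iff_inner_nonpos (a b w : Pt) : w ∈ diskD a b ↔ ⟪w - a, w - b⟫ ≤ 0 := by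
  have hcenter : w - midpoint ℝ a b = (2⁻¹ : ℝ) • ((w - a) + (w - b)) := by
    rw [midpoint_eq_smul_add, invOf_eq_inv]; module
  have hdiam : a - b = (w - b) - (w - a) := by abel
  rw [diskD, Metric.mem_closedBall, dist_eq_norm, dist_eq_norm, hcenter, hdiam, norm_smul,
    Real.norm_of_nonneg (by norm_num), inv_mul_eq_div,
    div_le_div_iff_of_pos_right two_pos, ← sq_le_sq₀ (norm_nonneg _) (norm_nonneg _),
    norm_add_sq_real (w - a), norm_sub_sq_real (w - b), real_inner_comm (w - b)]
  constructor <;> intro h <;> linarith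

theorem inner_pos_of_gabrielEdge {W : Set Pt} {a b w : Pt} (h : gabrielEdge W a b) (hw : w ∈ W)
    (hwa : w ≠ a) (hwb : w ≠ b) : 0 < ⟪w - a, w - b⟫ := by
  by_contra! hle
  have : w ∈ (diskD a b \ {a, b}) ∩ W :=
    ⟨⟨(mem_diskD_iff_inner_nonpos a b w).2 hle, by simp [hwa, hwb]⟩, hw⟩
  rw [gabrielEdge] at h
  simp [h] at this

theorem exists_inner_neg_of_mem_interior_convexHull {E : Type*} [NormedAddCommGroup E]
    [InnerProductSpace ℝ E] {s : Set E} {w u : E} (hw : w ∈ interior (convexHull ℝ s))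
    (hu : u ≠ 0) : ∃ p ∈ s, ⟪p - w, u⟫ < 0 := by
  by_contra! hs
  have hhull : convexHull ℝ s ⊆ {x | ⟪w, u⟫ ≤ ⟪x, u⟫} := by
    refine convexHull_min (fun p hp => ?_) (convex_halfSpace_ge ?_ _)
    · simpa [inner_sub_left] using hs p hp
    · exact ⟨fun x y => inner_add_left x y u, fun r x => real_inner_smul_left x u r⟩
  have hnear : ∀ᶠ t : ℝ in 𝓝[>] 0, w - t • u ∈ interior (convexHull ℝ s) := by
    have : Filter.Tendsto (fun t : ℝ => w - t • u) (𝓝 0) (𝓝 w) :=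
      (by fun_prop : Continuous fun t : ℝ => w - t • u).tendsto' 0 w (by simp)
    exact (this.eventually (isOpen_interior.mem_nhds hw)).filter_mono nhdsWithin_le_nhds
  obtain ⟨t, ht, htpos⟩ := (hnear.and self_mem_nhdsWithin).exists
  have := hhull (interior_subset ht)
  simp only [Set.mem_ofPred_eq, inner_sub_left, real_inner_smul_left,
    real_inner_self_eq_norm_sq] at this
  have : 0 < t * ‖u‖ ^ 2 := mul_pos htpos (by positivity)
  linarith

theorem inner_eq_fin_two (x y : Pt) : ⟪x, y⟫ = x 0 * y 0 + x 1 * y 1 := by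
  simp [PiLp.inner_apply, Fin.sum_univ_two]; ring

theorem det2_sq_mul_inner (u v x y : Pt) :
    det2 u v ^ 2 * ⟪x, y⟫ = ⟪u, x⟫ * ⟪u, y⟫ * ‖v‖ ^ 2 + ⟪v, x⟫ * ⟪v, y⟫ * ‖u‖ ^ 2
      - ⟪u, v⟫ * (⟪u, x⟫ * ⟪v, y⟫ + ⟪v, x⟫ * ⟪u, y⟫) := by
  simp only [det2, ← real_inner_self_eq_norm_sq, inner_eq_fin_two]; ring

theorem inner_nonneg_of_inner_neg_of_inner_pos {u v x y : Pt} (huv : ⟪u, v⟫ < 0)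
    (hux : 0 < ⟪u, x⟫) (huy : 0 < ⟪u, y⟫) (hvx : 0 < ⟪v, x⟫) (hvy : 0 < ⟪v, y⟫) :
    0 ≤ ⟪x, y⟫ := by
  by_contra! hxy
  have hu : 0 < ‖u‖ := norm_pos_iff.2 fun h => by simp [h] at hux
  have hv : 0 < ‖v‖ := norm_pos_iff.2 fun h => by simp [h] at hvx
  have hlhs : det2 u v ^ 2 * ⟪x, y⟫ ≤ 0 := mul_nonpos_of_nonneg_of_nonpos (sq_nonneg _) hxy.le
  have hmixed : 0 < -⟪u, v⟫ * (⟪u, x⟫ * ⟪v, y⟫ + ⟪v, x⟫ * ⟪u, y⟫) := by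
    have := neg_pos.2 huv; positivity
  linarith [det2_sq_mul_inner u v x y, mul_pos (mul_pos hux huy) (pow_pos hv 2),
    mul_pos (mul_pos hvx hvy) (pow_pos hu 2)]

section Drawing

variable {ι : Type*} {P W : Set Pt} {c : Pt → ι} {w : Pt}

theorem inner_pos_of_color_ne (hedge : ∀ a ∈ P, ∀ b ∈ P, c a ≠ c b → gabrielEdge W a b)
    (hw : w ∈ W) {p q : Pt} (hp : p ∈ P) (hq : q ∈ P) (hpq : c p ≠ c q) (hpw : p ≠ w)
    (hqw : q ≠ w) : 0 < ⟪w - p, w - q⟫ :=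
  inner_pos_of_gabrielEdge (hedge p hp q hq hpq) hw hpw.symm hqw.symm

theorem exists_inner_neg_of_color_eq (hedge : ∀ a ∈ P, ∀ b ∈ P, c a ≠ c b → gabrielEdge W a b)
    (hw : w ∈ W) (hwP : w ∈ interior (convexHull ℝ P)) {x : Pt} (hx : x ∈ P) (hxw : x ≠ w) :
    ∃ x' ∈ P, c x' = c x ∧ ⟪w - x, w - x'⟫ < 0 := by
  obtain ⟨q, hq, hqx⟩ := exists_inner_neg_of_mem_interior_convexHull hwP (sub_ne_zero.2 hxw)
  have hobtuse : ⟪w - x, w - q⟫ < 0 := by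
    rwa [← neg_sub x w, ← neg_sub q w, inner_neg_neg, real_inner_comm]
  refine ⟨q, hq, ?_, hobtuse⟩
  by_contra hcq
  have hqw : q ≠ w := by rintro rfl; simp at hobtuse
  exact (inner_pos_of_color_ne hedge hw hx hq (Ne.symm hcq) hxw hqw).not_gt hobtuse

end Drawing

theorem K2222_no_witness_inside_hull_general
    (P W : Finset Pt) (c : Pt → Fin 4)
    (hsize : ∀ i : Fin 4, (P.filter (fun p => c p = i)).card = 2)
    (hdraw : ∀ a ∈ P, ∀ b ∈ P, a ≠ b →
      (gabrielEdge (W : Set Pt) a b ↔ c a ≠ c b)) :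
    (W : Set Pt) ∩ interior (convexHull ℝ (P : Set Pt)) = ∅ := by
  have hedge : ∀ a ∈ (P : Set Pt), ∀ b ∈ (P : Set Pt), c a ≠ c b → gabrielEdge W a b :=
    fun a ha b hb hab => (hdraw a ha b hb (ne_of_apply_ne c hab)).2 hab
  have hclass (k : Fin 4) : ∃ p ∈ P, c p = k := by
    obtain ⟨p, hp⟩ := Finset.card_pos.1 (hsize k ▸ two_pos)
    exact ⟨p, Finset.mem_filter.1 hp⟩
  refine Set.eq_empty_of_forall_notMem fun w ⟨hw, hwP⟩ => ?_
  -- `c w` makes sense even if `w ∉ P`; vertices of the two other colours chosen here are `≠ w`.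
  obtain ⟨i, j, hij, hiw, hjw⟩ :=
    (by decide : ∀ k : Fin 4, ∃ i j : Fin 4, i ≠ j ∧ i ≠ k ∧ j ≠ k) (c w)
  have hcross {p q : Pt} (hp : p ∈ (P : Set Pt)) (hq : q ∈ (P : Set Pt)) (hpi : c p = i)
      (hqj : c q = j) : 0 < ⟪w - p, w - q⟫ :=
    inner_pos_of_color_ne hedge hw hp hq (hpi ▸ hqj ▸ hij) (ne_of_apply_ne c (hpi ▸ hiw))
      (ne_of_apply_ne c (hqj ▸ hjw))
  obtain ⟨a, ha, hai⟩ := hclass i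
  obtain ⟨b, hb, hbj⟩ := hclass j
  obtain ⟨a', ha', ha'c, haa'⟩ :=
    exists_inner_neg_of_color_eq hedge hw hwP ha (ne_of_apply_ne c (hai ▸ hiw))
  obtain ⟨b', hb', hb'c, hbb'⟩ :=
    exists_inner_neg_of_color_eq hedge hw hwP hb (ne_of_apply_ne c (hbj ▸ hjw))
  exact (inner_nonneg_of_inner_neg_of_inner_pos haa' (hcross ha hb hai hbj)
    (hcross ha hb' hai (hb'c.trans hbj)) (hcross ha' hb (ha'c.trans hai) hbj)
    (hcross ha' hb' (ha'c.trans hai) (hb'c.trans hbj))).not_gt hbb'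

/-- In a witness Gabriel drawing of `K_{2,2,2,2}`, no witness lies in the
interior of the convex hull of the vertices. -/
theorem K2222_no_witness_inside_hull
    (P W : Finset Pt) (c : Pt → Fin 4)
    (hcard : P.card = 8)
    (hsize : ∀ i : Fin 4, (P.filter (fun p => c p = i)).card = 2)
    (hgp : GenPos ((P : Set Pt) ∪ (W : Set Pt)))
    (hdraw : ∀ a ∈ P, ∀ b ∈ P, a ≠ b →
      (gabrielEdge (W : Set Pt) a b ↔ c a ≠ c b)) :
    (W : Set Pt) ∩ interior (convexHull ℝ (P : Set Pt)) = ∅ :=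
  K2222_no_witness_inside_hull_general P W c hsize hdraw
end
end
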